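/- arXiv:2603.03748 — 2 statements merged into one kernel-verified Lean document; each statement's English description precedes it below -/
import Mathlib

section
/- For all real numbers a > 0 and b > 0, the expected Shannon entropy of a Beta(a, b)-distributed probability p (viewed as the two-class probability vector (p, 1−p)) has the closed form: (Γ(a+b)/(Γ(a)·Γ(b))) · ∫_0^1 x^{a−1}(1−x)^{b−1} · (negMulLog(x) + negMulLog(1−x)) dx = (a/(a+b))·(ψ(a+b+1) − ψ(a+1)) + (b/(a+b))·(ψ(a+b+1) − ψ(b+1)). (This is the K = 2 case of the analytical aleatoric uncertainty formula H_aleatoric = ∑_k (α_k/S)(ψ(S+1) − ψ(α_k+1)) for Dirichlet parameters α, S = ∑_k α_k.) -/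
/-- The digamma function: the logarithmic derivative of the Gamma function. -/
noncomputable def digamma (x : ℝ) : ℝ :=
  deriv (fun t => Real.log (Real.Gamma t)) x

/-!
Writing `negMulLog` out, the expected entropy is minus the sum of two logarithmic moments of
Beta densities. The moment `∫₀¹ x ^ (s - 1) log x (1 - x) ^ (t - 1) dx` is the `s`-derivative of
the Beta integral `B(s, t) = Γ(s) Γ(t) / Γ(s + t)`, namely `B(s, t) (ψ(s) - ψ(s + t))`; the
differentiation under the integral sign is dominated thanks to `|x ^ ε log x| ≤ 1 / ε` on
`(0, 1]`. The moment with `log (1 - x)` reduces to it under `x ↦ 1 - x`, and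
`B(a + 1, b) = a / (a + b) B(a, b)` produces the weights `a / (a + b)` and `b / (a + b)`.
-/

open Real MeasureTheory Set Filter Metric intervalIntegral ProbabilityTheory

lemma ofReal_cpow_sub_one_mul_one_sub_cpow {x : ℝ} (hx₀ : 0 ≤ x) (hx₁ : x ≤ 1) (s t : ℝ) :
    (x : ℂ) ^ ((s : ℂ) - 1) * (1 - (x : ℂ)) ^ ((t : ℂ) - 1) =
      ((x ^ (s - 1) * (1 - x) ^ (t - 1) : ℝ) : ℂ) := by
  have h1x : 0 ≤ 1 - x := sub_nonneg.2 hx₁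
  push_cast [Complex.ofReal_cpow hx₀, Complex.ofReal_cpow h1x]
  rfl

lemma Complex.betaIntegral_ofReal {s t : ℝ} :
    Complex.betaIntegral s t = ((∫ x in (0 : ℝ)..1, x ^ (s - 1) * (1 - x) ^ (t - 1) : ℝ) : ℂ) := by
  rw [Complex.betaIntegral, ← intervalIntegral.integral_ofReal]
  refine integral_congr fun x hx => ?_
  rw [uIcc_of_le zero_le_one] at hx
  exact ofReal_cpow_sub_one_mul_one_sub_cpow hx.1 hx.2 s t

lemma intervalIntegrable_rpow_mul_one_sub_rpow {s t : ℝ} (hs : 0 < s) (ht : 0 < t) :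
    IntervalIntegrable (fun x : ℝ => x ^ (s - 1) * (1 - x) ^ (t - 1)) volume 0 1 := by
  have h := Complex.betaIntegral_convergent (u := s) (v := t) (by simpa) (by simpa)
  have h' : IntervalIntegrable (fun x : ℝ => ((x ^ (s - 1) * (1 - x) ^ (t - 1) : ℝ) : ℂ))
      volume 0 1 := by
    refine (intervalIntegrable_congr fun x hx => ?_).1 h
    rw [uIoc_of_le zero_le_one] at hx
    exact ofReal_cpow_sub_one_mul_one_sub_cpow hx.1.le hx.2 s t
  have h_re := (intervalIntegrable_iff.1 h').re
  simp only [RCLike.re_to_complex, Complex.ofReal_re] at h_re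
  exact intervalIntegrable_iff.2 h_re

lemma integral_rpow_mul_one_sub_rpow {s t : ℝ} (hs : 0 < s) (ht : 0 < t) :
    ∫ x in (0 : ℝ)..1, x ^ (s - 1) * (1 - x) ^ (t - 1) = beta s t := by
  rw [beta_eq_betaIntegralReal s t hs ht, Complex.betaIntegral_ofReal, Complex.ofReal_re]

lemma hasDerivAt_Gamma_eq_digamma_mul {y : ℝ} (hy : ∀ m : ℕ, y ≠ -m) :
    HasDerivAt Gamma (digamma y * Gamma y) y := by
  have hΓ := (differentiableAt_Gamma hy).hasDerivAt
  have hψ : digamma y = deriv Gamma y / Gamma y := (hΓ.log (Gamma_ne_zero hy)).deriv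
  rwa [hψ, div_mul_cancel₀ _ (Gamma_ne_zero hy)]

lemma hasDerivAt_beta_left {s t : ℝ} (hs : ∀ m : ℕ, s ≠ -m) (hst : ∀ m : ℕ, s + t ≠ -m) :
    HasDerivAt (fun u => beta u t) (beta s t * (digamma s - digamma (s + t))) s := by
  have hnum := (hasDerivAt_Gamma_eq_digamma_mul hs).mul_const (Gamma t)
  have hden := (hasDerivAt_Gamma_eq_digamma_mul hst).comp_add_const s t
  refine (hnum.div hden (Gamma_ne_zero hst)).congr_deriv ?_
  have hΓ := Gamma_ne_zero hst
  simp only [beta]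
  field_simp

lemma norm_rpow_mul_log_mul_one_sub_rpow_le {x ε u w : ℝ} (hx : x ∈ Ioc 0 1) (hε : 0 < ε)
    (hw : w ≤ u - ε) (t : ℝ) :
    ‖x ^ (u - 1) * log x * (1 - x) ^ (t - 1)‖ ≤ 1 / ε * (x ^ (w - 1) * (1 - x) ^ (t - 1)) := by
  obtain ⟨hx₀, hx₁⟩ := hx
  have h_log : |log x * x ^ ε| * ε ≤ 1 :=
    (le_div_iff₀ hε).1 (abs_log_mul_self_rpow_lt x ε hx₀ hx₁ hε).le
  have h_pow : x ^ (u - 1 - ε) ≤ x ^ (w - 1) := rpow_le_rpow_of_exponent_ge hx₀ hx₁ (by linarith)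
  have h_split : x ^ (u - 1) = x ^ (u - 1 - ε) * x ^ ε := by rw [← rpow_add hx₀, sub_add_cancel]
  have h_abs : |x ^ (u - 1) * log x| * ε ≤ x ^ (w - 1) :=
    calc |x ^ (u - 1) * log x| * ε = x ^ (u - 1 - ε) * (|log x * x ^ ε| * ε) := by
          rw [h_split, abs_mul, abs_mul, abs_mul, abs_of_pos (rpow_pos_of_pos hx₀ _),
            abs_of_pos (rpow_pos_of_pos hx₀ ε)]
          ring
      _ ≤ x ^ (w - 1) := by nlinarith [rpow_pos_of_pos hx₀ (u - 1 - ε)]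
  rw [norm_mul, norm_eq_abs, norm_of_nonneg (rpow_nonneg (sub_nonneg.2 hx₁) _), ← mul_assoc]
  gcongr
  rwa [one_div_mul_eq_div, le_div_iff₀ hε]

lemma intervalIntegrable_rpow_mul_log_mul_one_sub_rpow {s t : ℝ} (hs : 0 < s) (ht : 0 < t) :
    IntervalIntegrable (fun x : ℝ => x ^ (s - 1) * log x * (1 - x) ^ (t - 1)) volume 0 1 := by
  refine ((intervalIntegrable_rpow_mul_one_sub_rpow (half_pos hs) ht).const_mul
    (1 / (s / 2))).mono_fun' (by fun_prop) ?_
  rw [uIoc_of_le zero_le_one]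
  refine (ae_restrict_iff' measurableSet_Ioc).2 (ae_of_all _ fun x hx => ?_)
  exact norm_rpow_mul_log_mul_one_sub_rpow_le hx (half_pos hs) (by linarith) t

lemma hasDerivAt_integral_rpow_mul_one_sub_rpow {s t : ℝ} (hs : 0 < s) (ht : 0 < t) :
    HasDerivAt (fun u => ∫ x in (0 : ℝ)..1, x ^ (u - 1) * (1 - x) ^ (t - 1))
      (∫ x in (0 : ℝ)..1, x ^ (s - 1) * log x * (1 - x) ^ (t - 1)) s := by
  have h_bound : ∀ᵐ x, x ∈ uIoc (0 : ℝ) 1 → ∀ u ∈ ball s (s / 2),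
      ‖x ^ (u - 1) * log x * (1 - x) ^ (t - 1)‖ ≤
        1 / (s / 4) * (x ^ (s / 4 - 1) * (1 - x) ^ (t - 1)) := by
    refine ae_of_all _ fun x hx u hu => ?_
    rw [uIoc_of_le zero_le_one] at hx
    exact norm_rpow_mul_log_mul_one_sub_rpow_le hx (by positivity)
      (by linarith [(abs_lt.1 (mem_ball_iff_norm.1 hu)).1]) t
  have h_diff : ∀ᵐ x, x ∈ uIoc (0 : ℝ) 1 → ∀ u ∈ ball s (s / 2),
      HasDerivAt (fun u => x ^ (u - 1) * (1 - x) ^ (t - 1))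
        (x ^ (u - 1) * log x * (1 - x) ^ (t - 1)) u := by
    refine ae_of_all _ fun x hx u _ => ?_
    rw [uIoc_of_le zero_le_one] at hx
    exact ((hasStrictDerivAt_const_rpow hx.1 (u - 1)).hasDerivAt.comp_sub_const u 1).mul_const _
  exact (hasDerivAt_integral_of_dominated_loc_of_deriv_le (ball_mem_nhds s (half_pos hs))
    (Eventually.of_forall fun u => by fun_prop) (intervalIntegrable_rpow_mul_one_sub_rpow hs ht)
    (by fun_prop) h_bound
    ((intervalIntegrable_rpow_mul_one_sub_rpow (by positivity) ht).const_mul _) h_diff).2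

lemma integral_rpow_mul_log_mul_one_sub_rpow {s t : ℝ} (hs : 0 < s) (ht : 0 < t) :
    ∫ x in (0 : ℝ)..1, x ^ (s - 1) * log x * (1 - x) ^ (t - 1) =
      beta s t * (digamma s - digamma (s + t)) := by
  have h_beta : (fun u => ∫ x in (0 : ℝ)..1, x ^ (u - 1) * (1 - x) ^ (t - 1)) =ᶠ[nhds s]
      fun u => beta u t := by
    filter_upwards [Ioi_mem_nhds hs] with u hu
    exact integral_rpow_mul_one_sub_rpow hu ht
  have h_nonneg {y : ℝ} (hy : 0 < y) (m : ℕ) : y ≠ -m := by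
    linarith [(Nat.cast_nonneg m : (0 : ℝ) ≤ m)]
  exact (hasDerivAt_integral_rpow_mul_one_sub_rpow hs ht).unique
    ((hasDerivAt_beta_left (h_nonneg hs) (h_nonneg (add_pos hs ht))).congr_of_eventuallyEq h_beta)

lemma beta_comm (s t : ℝ) : beta s t = beta t s := by
  rw [beta, beta, mul_comm, add_comm]

lemma intervalIntegrable_rpow_mul_one_sub_rpow_mul_log_one_sub {s t : ℝ} (hs : 0 < s)
    (ht : 0 < t) :
    IntervalIntegrable (fun x : ℝ => x ^ (s - 1) * (1 - x) ^ (t - 1) * log (1 - x)) volume 0 1 := by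
  have h := (intervalIntegrable_rpow_mul_log_mul_one_sub_rpow ht hs).comp_sub_left 1
  simp only [sub_self, sub_zero, sub_sub_cancel] at h
  convert h.symm using 1
  ext x
  ring

lemma integral_rpow_mul_one_sub_rpow_mul_log_one_sub {s t : ℝ} (hs : 0 < s) (ht : 0 < t) :
    ∫ x in (0 : ℝ)..1, x ^ (s - 1) * (1 - x) ^ (t - 1) * log (1 - x) =
      beta s t * (digamma t - digamma (s + t)) := by
  have h := integral_comp_sub_left
    (fun x : ℝ => x ^ (t - 1) * log x * (1 - x) ^ (s - 1)) (a := 0) (b := 1) 1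
  simp only [sub_self, sub_zero, sub_sub_cancel, integral_rpow_mul_log_mul_one_sub_rpow ht hs] at h
  rw [beta_comm, add_comm, ← h]
  congr 1 with x
  ring

lemma beta_add_one_left {s t : ℝ} (hs : s ≠ 0) (hst : s + t ≠ 0) :
    beta (s + 1) t = s / (s + t) * beta s t := by
  rw [beta, beta, add_right_comm, Gamma_add_one hs, Gamma_add_one hst, mul_assoc,
    mul_div_mul_comm]

lemma beta_add_one_right {s t : ℝ} (ht : t ≠ 0) (hst : s + t ≠ 0) :
    beta s (t + 1) = t / (s + t) * beta s t := by
  rw [beta_comm, beta_add_one_left ht (by rwa [add_comm]), beta_comm, add_comm t]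

lemma rpow_sub_one_mul_negMulLog {x : ℝ} (hx : 0 ≤ x) (a : ℝ) :
    x ^ (a - 1) * negMulLog x = -(x ^ a * log x) := by
  rcases hx.eq_or_lt with rfl | hx
  · simp
  · rw [negMulLog, rpow_sub_one hx.ne']
    field_simp

/-- **Analytical aleatoric uncertainty, `K = 2` (Beta) case.** For `a, b > 0`, the
expected Shannon entropy of the two-class probability vector `(p, 1−p)` with
`p ∼ Beta(a, b)` has the closed form
`(a/(a+b))(ψ(a+b+1) − ψ(a+1)) + (b/(a+b))(ψ(a+b+1) − ψ(b+1))`. -/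
theorem beta_expected_entropy (a b : ℝ) (ha : 0 < a) (hb : 0 < b) :
    (Real.Gamma (a + b) / (Real.Gamma a * Real.Gamma b)) *
        ∫ x in (0:ℝ)..1, x ^ (a - 1) * (1 - x) ^ (b - 1) *
          (Real.negMulLog x + Real.negMulLog (1 - x)) =
      (a / (a + b)) * (digamma (a + b + 1) - digamma (a + 1)) +
        (b / (a + b)) * (digamma (a + b + 1) - digamma (b + 1)) := by
  -- exponents `a + 1 - 1`, `b + 1 - 1` match the logarithmic moments at `a + 1` and `b + 1`
  have h_split : EqOn (fun x : ℝ => x ^ (a - 1) * (1 - x) ^ (b - 1) *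
        (negMulLog x + negMulLog (1 - x)))
      (fun x => -(x ^ (a + 1 - 1) * log x * (1 - x) ^ (b - 1) +
        x ^ (a - 1) * (1 - x) ^ (b + 1 - 1) * log (1 - x))) (uIcc 0 1) := by
    intro x hx
    rw [uIcc_of_le zero_le_one] at hx
    have h₀ := rpow_sub_one_mul_negMulLog hx.1 a
    have h₁ := rpow_sub_one_mul_negMulLog (sub_nonneg.2 hx.2) b
    simp only [add_sub_cancel_right]
    linear_combination (1 - x) ^ (b - 1) * h₀ + x ^ (a - 1) * h₁
  have hab := add_pos ha hb
  rw [integral_congr h_split, intervalIntegral.integral_neg, intervalIntegral.integral_add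
      (intervalIntegrable_rpow_mul_log_mul_one_sub_rpow (by linarith) hb)
      (intervalIntegrable_rpow_mul_one_sub_rpow_mul_log_one_sub ha (by linarith)),
    integral_rpow_mul_log_mul_one_sub_rpow (by linarith) hb,
    integral_rpow_mul_one_sub_rpow_mul_log_one_sub ha (by linarith),
    beta_add_one_left ha.ne' hab.ne', beta_add_one_right hb.ne' hab.ne',
    add_right_comm a 1 b, ← add_assoc,
    show Gamma (a + b) / (Gamma a * Gamma b) = (beta a b)⁻¹ from (inv_div _ _).symm]
  field_simp [(beta_pos ha hb).ne']
  ring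
end

section
/- The difference between the digamma function and the logarithm tends to zero at infinity: the function x ↦ ψ(x) − log(x) tends to 0 as x → ∞ (along the atTop filter on ℝ). -/
/-!
`log ∘ Γ` is convex on `(0, ∞)` (Bohr–Mollerup) and satisfies `log Γ(x + 1) = log Γ(x) + log x`.
Comparing its derivative at `x` with the slopes of the chords over `[x - 1, x]` and `[x, x + 1]`
gives `log (x - 1) ≤ ψ(x) ≤ log x`, and both bounds differ from `log x` by `o(1)`.
-/

open Real Set Filter Topology

section LogConvexFunctionalEquation

variable {f : ℝ → ℝ} {x : ℝ}

lemma deriv_le_log_of_convexOn_of_add_one (hf : ConvexOn ℝ (Ioi 0) f)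
    (hf_feq : ∀ y, 0 < y → f (y + 1) = f y + log y) (hx : 0 < x)
    (hdiff : DifferentiableAt ℝ f x) : deriv f x ≤ log x := by
  calc deriv f x ≤ slope f x (x + 1) :=
        hf.deriv_le_slope hx (mem_Ioi.mpr (by linarith)) (by linarith) hdiff
    _ = log x := by
        rw [slope_def_field, add_sub_cancel_left, div_one, hf_feq x hx, add_sub_cancel_left]

lemma log_sub_one_le_deriv_of_convexOn_of_add_one (hf : ConvexOn ℝ (Ioi 0) f)
    (hf_feq : ∀ y, 0 < y → f (y + 1) = f y + log y) (hx : 1 < x)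
    (hdiff : DifferentiableAt ℝ f x) : log (x - 1) ≤ deriv f x := by
  have hx' : 0 < x - 1 := sub_pos.mpr hx
  calc log (x - 1) = slope f (x - 1) x := by
        rw [slope_def_field, sub_sub_cancel, div_one, eq_sub_iff_add_eq', ← hf_feq _ hx',
          sub_add_cancel]
    _ ≤ deriv f x := hf.slope_le_deriv hx' (mem_Ioi.mpr (by linarith)) (by linarith) hdiff

end LogConvexFunctionalEquation

lemma log_Gamma_add_one {x : ℝ} (hx : 0 < x) :
    log (Gamma (x + 1)) = log (Gamma x) + log x := by
  rw [Gamma_add_one hx.ne', log_mul hx.ne' (Gamma_pos_of_pos hx).ne', add_comm]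

lemma differentiableAt_log_Gamma {x : ℝ} (hx : 0 < x) :
    DifferentiableAt ℝ (fun t => log (Gamma t)) x := by
  have hx_ne : ∀ m : ℕ, x ≠ -m := fun m => (hx.trans_le' (by simp)).ne'
  exact (differentiableAt_Gamma hx_ne).log (Gamma_ne_zero hx_ne)

lemma digamma_le_log {x : ℝ} (hx : 0 < x) : digamma x ≤ log x :=
  deriv_le_log_of_convexOn_of_add_one convexOn_log_Gamma (fun _ => log_Gamma_add_one) hx
    (differentiableAt_log_Gamma hx)

lemma log_sub_one_le_digamma {x : ℝ} (hx : 1 < x) : log (x - 1) ≤ digamma x :=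
  log_sub_one_le_deriv_of_convexOn_of_add_one convexOn_log_Gamma (fun _ => log_Gamma_add_one) hx
    (differentiableAt_log_Gamma (one_pos.trans hx))

/-- **Asymptotics of digamma.** The difference `ψ(x) − log x` tends to `0` as
`x → ∞`. -/
theorem digamma_sub_log_tendsto_zero :
    Filter.Tendsto (fun x : ℝ => digamma x - Real.log x) Filter.atTop (nhds 0) := by
  have h_lower : Tendsto (fun x : ℝ => log (x - 1) - log x) atTop (𝓝 0) := by
    simpa only [← sub_eq_add_neg] using tendsto_log_comp_add_sub_log (-1)
  refine tendsto_of_tendsto_of_tendsto_of_le_of_le' h_lower tendsto_const_nhds ?_ ?_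
  · filter_upwards [eventually_gt_atTop 1] with x hx
    exact sub_le_sub_right (log_sub_one_le_digamma hx) _
  · filter_upwards [eventually_gt_atTop 0] with x hx
    exact sub_nonpos.mpr (digamma_le_log hx)
end
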